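/- Sandwich convergence: if δ_k := C(T̲_k) − C(T̄_k) ≤ ε for some k, then any two values among { C(T_k), C(T_K), C(T_m) for k ≤ m ≤ K } differ by at most ε. -/

import Mathlib

/-
`T̲_k` and `T̄_k` are the mixture `T_K` with the experts `k+1, …, K` replaced by the constants
`0` and `1`. As the experts take values in `[0, 1]`, every `T_m` with `k ≤ m ≤ K` lies between
them pointwise. On maps bounded by `1` the optimal cost is antitone (each path cost decreases
and the feasible set grows as `T` increases), so all the `C(T_m)` lie in the interval
`[C(T̄_k), C(T̲_k)]`, whose length is `δ_k ≤ ε`.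
-/

/-- Cost of a path `τ` under traversability map `T` with auxiliary cost `f'`. -/
def pathCost {V : Type*} (f' : List V → ℝ) (T : V → ℝ) (τ : List V) : ℝ :=
  (τ.map fun v => (1 - T v) ^ 2).sum + f' τ

/-- Feasible path set: paths in `P` all of whose vertices have traversability at least `θ`. -/
def feasSet {V : Type*} (P : Finset (List V)) (θ : ℝ) (T : V → ℝ) : Set (List V) :=
  {τ | τ ∈ P ∧ ∀ v ∈ τ, θ ≤ T v}

/-- Optimal path cost over the feasible set. -/
noncomputable def optCost {V : Type*} (P : Finset (List V)) (θ : ℝ)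
    (f' : List V → ℝ) (T : V → ℝ) : ℝ :=
  sInf (pathCost f' T '' feasSet P θ T)

namespace Finset

variable {ι : Type*} {s t u : Finset ι} {w x : ι → ℝ}

lemma sum_mul_le_sum_of_le_one (hw : ∀ i ∈ s, 0 ≤ w i) (hx : ∀ i ∈ s, x i ≤ 1) :
    ∑ i ∈ s, w i * x i ≤ ∑ i ∈ s, w i :=
  sum_le_sum fun i hi => mul_le_of_le_one_right (hw i hi) (hx i hi)

lemma sum_mul_div_sum_le_weighted_mean (hst : s ⊆ t) (htu : t ⊆ u)
    (hw : ∀ i ∈ u, 0 ≤ w i) (hx : ∀ i ∈ u, 0 ≤ x i ∧ x i ≤ 1) :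
    (∑ i ∈ s, w i * x i) / ∑ i ∈ u, w i ≤ (∑ i ∈ t, w i * x i) / ∑ i ∈ t, w i := by
  have hwt : ∀ i ∈ t, 0 ≤ w i := fun i hi => hw i (htu hi)
  have hAt : 0 ≤ ∑ i ∈ t, w i * x i :=
    sum_nonneg fun i hi => mul_nonneg (hwt i hi) (hx i (htu hi)).1
  have hWtu : ∑ i ∈ t, w i ≤ ∑ i ∈ u, w i :=
    sum_le_sum_of_subset_of_nonneg htu fun i hi _ => hw i hi
  calc (∑ i ∈ s, w i * x i) / ∑ i ∈ u, w i
      ≤ (∑ i ∈ t, w i * x i) / ∑ i ∈ u, w i :=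
        div_le_div_of_nonneg_right
          (sum_le_sum_of_subset_of_nonneg hst fun i hi _ =>
            mul_nonneg (hwt i hi) (hx i (htu hi)).1)
          ((sum_nonneg hwt).trans hWtu)
    _ ≤ (∑ i ∈ t, w i * x i) / ∑ i ∈ t, w i := by
        rcases (sum_nonneg hwt).eq_or_lt with hWt0 | hWt_pos
        · have hAt0 : ∑ i ∈ t, w i * x i = 0 :=
            le_antisymm ((sum_mul_le_sum_of_le_one hwt fun i hi => (hx i (htu hi)).2).trans
              hWt0.ge) hAt
          simp [hAt0]
        · exact div_le_div_of_nonneg_left hAt hWt_pos hWtu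

lemma weighted_mean_le_sum_mul_add_sum_sdiff_div_sum [DecidableEq ι] (hst : s ⊆ t)
    (htu : t ⊆ u) (hw : ∀ i ∈ u, 0 ≤ w i) (hx : ∀ i ∈ u, 0 ≤ x i ∧ x i ≤ 1) :
    (∑ i ∈ t, w i * x i) / ∑ i ∈ t, w i
      ≤ (∑ i ∈ s, w i * x i + ∑ i ∈ u \ s, w i) / ∑ i ∈ u, w i := by
  have hwt : ∀ i ∈ t, 0 ≤ w i := fun i hi => hw i (htu hi)
  have hWus : 0 ≤ ∑ i ∈ u \ s, w i := sum_nonneg fun i hi => hw i (mem_sdiff.1 hi).1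
  have hAs : 0 ≤ ∑ i ∈ s, w i * x i :=
    sum_nonneg fun i hi => mul_nonneg (hwt i (hst hi)) (hx i (htu (hst hi))).1
  have hWtu : ∑ i ∈ t, w i ≤ ∑ i ∈ u, w i :=
    sum_le_sum_of_subset_of_nonneg htu fun i hi _ => hw i hi
  rcases (sum_nonneg hwt).eq_or_lt with hWt0 | hWt_pos
  · rw [← hWt0, div_zero]
    exact div_nonneg (add_nonneg hAs hWus) (sum_nonneg hw)
  have hAt_le : ∑ i ∈ t, w i * x i ≤ ∑ i ∈ t, w i :=
    sum_mul_le_sum_of_le_one hwt fun i hi => (hx i (htu hi)).2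
  have hAts_le : ∑ i ∈ t \ s, w i * x i ≤ ∑ i ∈ t \ s, w i :=
    sum_mul_le_sum_of_le_one (fun i hi => hwt i (mem_sdiff.1 hi).1)
      fun i hi => (hx i (htu (mem_sdiff.1 hi).1)).2
  have hAt := sum_sdiff (f := fun i => w i * x i) hst
  have hWt := sum_sdiff (f := w) hst
  have hWu := sum_sdiff (f := w) (hst.trans htu)
  rw [div_le_div_iff₀ hWt_pos (hWt_pos.trans_le hWtu)]
  -- With `A`, `W` the sums of `w * x` and `w`: `(A s + W u - W s) W t - A t W u
  -- = W u (W t - A t) - W t (W s - A s) ≥ W t ((W t - A t) - (W s - A s)) ≥ 0`.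
  nlinarith [mul_le_mul_of_nonneg_right hWtu (sub_nonneg.2 hAt_le),
    mul_nonneg hWt_pos.le (sub_nonneg.2 hAts_le)]

lemma sum_mul_add_sum_sdiff_div_sum_le_one [DecidableEq ι] (hsu : s ⊆ u)
    (hw : ∀ i ∈ u, 0 ≤ w i) (hx : ∀ i ∈ u, x i ≤ 1) :
    (∑ i ∈ s, w i * x i + ∑ i ∈ u \ s, w i) / ∑ i ∈ u, w i ≤ 1 := by
  refine div_le_one_of_le₀ ?_ (sum_nonneg hw)
  rw [← sum_sdiff hsu, add_comm]
  linarith [sum_mul_le_sum_of_le_one (fun i hi => hw i (hsu hi)) fun i hi => hx i (hsu hi)]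

lemma Icc_one_sdiff_Icc_one (k K : ℕ) : Icc 1 K \ Icc 1 k = Icc (k + 1) K := by
  ext
  simp only [mem_sdiff, mem_Icc]
  omega

end Finset

section Mixture

open Finset

variable {w x : ℕ → ℝ} {k m K : ℕ}

lemma mixture_mem_envelopes (hw : ∀ j ∈ Icc 1 K, 0 ≤ w j)
    (hx : ∀ j ∈ Icc 1 K, 0 ≤ x j ∧ x j ≤ 1) (hkm : k ≤ m) (hmK : m ≤ K) :
    (∑ j ∈ Icc 1 k, w j * x j) / ∑ j ∈ Icc 1 K, w j
        ≤ (∑ j ∈ Icc 1 m, w j * x j) / ∑ j ∈ Icc 1 m, w j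
      ∧ (∑ j ∈ Icc 1 m, w j * x j) / ∑ j ∈ Icc 1 m, w j
        ≤ (∑ j ∈ Icc 1 k, w j * x j + ∑ j ∈ Icc (k + 1) K, w j) / ∑ j ∈ Icc 1 K, w j :=
  ⟨sum_mul_div_sum_le_weighted_mean (Icc_subset_Icc_right hkm) (Icc_subset_Icc_right hmK) hw hx,
    Icc_one_sdiff_Icc_one k K ▸ weighted_mean_le_sum_mul_add_sum_sdiff_div_sum
      (Icc_subset_Icc_right hkm) (Icc_subset_Icc_right hmK) hw hx⟩

lemma upper_envelope_le_one (hw : ∀ j ∈ Icc 1 K, 0 ≤ w j) (hx : ∀ j ∈ Icc 1 K, x j ≤ 1)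
    (hkK : k ≤ K) :
    (∑ j ∈ Icc 1 k, w j * x j + ∑ j ∈ Icc (k + 1) K, w j) / ∑ j ∈ Icc 1 K, w j ≤ 1 :=
  Icc_one_sdiff_Icc_one k K ▸
    sum_mul_add_sum_sdiff_div_sum_le_one (Icc_subset_Icc_right hkK) hw hx

end Mixture

section PathCost

variable {V : Type*} (P : Finset (List V)) (θ : ℝ) (f' : List V → ℝ) {T₁ T₂ : V → ℝ}

lemma pathCost_antitone (h₁₂ : ∀ v, T₁ v ≤ T₂ v) (h₂ : ∀ v, T₂ v ≤ 1)
    (τ : List V) : pathCost f' T₂ τ ≤ pathCost f' T₁ τ := by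
  unfold pathCost
  gcongr 1
  exact List.sum_le_sum fun v _ =>
    pow_le_pow_left₀ (sub_nonneg.2 (h₂ v)) (sub_le_sub_left (h₁₂ v) 1) 2

lemma feasSet_mono (h₁₂ : ∀ v, T₁ v ≤ T₂ v) : feasSet P θ T₁ ⊆ feasSet P θ T₂ :=
  fun _ ⟨hP, hθ⟩ => ⟨hP, fun v hv => (hθ v hv).trans (h₁₂ v)⟩

lemma optCost_antitone (h₁₂ : ∀ v, T₁ v ≤ T₂ v) (h₂ : ∀ v, T₂ v ≤ 1)
    (hne : (feasSet P θ T₁).Nonempty) :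
    optCost P θ f' T₂ ≤ optCost P θ f' T₁ := by
  have hbdd : BddBelow (pathCost f' T₂ '' feasSet P θ T₂) :=
    ((P.finite_toSet.subset fun _ hτ => hτ.1).image _).bddBelow
  refine le_csInf (hne.image _) ?_
  rintro _ ⟨τ, hτ, rfl⟩
  exact (csInf_le hbdd ⟨τ, feasSet_mono P θ h₁₂ hτ, rfl⟩).trans
    (pathCost_antitone f' h₁₂ h₂ τ)

lemma optCost_mem_Icc {L T U : V → ℝ} (hLT : ∀ v, L v ≤ T v) (hTU : ∀ v, T v ≤ U v)
    (hU : ∀ v, U v ≤ 1) (hne : (feasSet P θ L).Nonempty) :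
    optCost P θ f' T ∈ Set.Icc (optCost P θ f' U) (optCost P θ f' L) :=
  ⟨optCost_antitone P θ f' hTU hU (hne.mono (feasSet_mono P θ hLT)),
    optCost_antitone P θ f' hLT (fun v => (hTU v).trans (hU v)) hne⟩

end PathCost

theorem sandwich_convergence_general
    {V : Type*} (P : Finset (List V)) (θ : ℝ) (f' : List V → ℝ)
    (K : ℕ) (That : ℕ → V → ℝ) (w : ℕ → ℝ)
    (hw : ∀ j, 1 ≤ j → j ≤ K → 0 < w j)
    (hT : ∀ j, 1 ≤ j → j ≤ K → ∀ v, 0 ≤ That j v ∧ That j v ≤ 1)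
    (k : ℕ) (hkK : k ≤ K)
    (hne : (feasSet P θ (fun v =>
      (∑ j ∈ Finset.Icc 1 k, w j * That j v) / (∑ j ∈ Finset.Icc 1 K, w j))).Nonempty)
    (ε : ℝ)
    (hδ : optCost P θ f' (fun v =>
            (∑ j ∈ Finset.Icc 1 k, w j * That j v) / (∑ j ∈ Finset.Icc 1 K, w j))
          - optCost P θ f' (fun v =>
            (∑ j ∈ Finset.Icc 1 k, w j * That j v + ∑ j ∈ Finset.Icc (k+1) K, w j)
              / (∑ j ∈ Finset.Icc 1 K, w j)) ≤ ε) :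
    (∀ m, k ≤ m → m ≤ K → ∀ v : V,
        (∑ j ∈ Finset.Icc 1 k, w j * That j v) / (∑ j ∈ Finset.Icc 1 K, w j)
          ≤ (∑ j ∈ Finset.Icc 1 m, w j * That j v) / (∑ j ∈ Finset.Icc 1 m, w j)
      ∧ (∑ j ∈ Finset.Icc 1 m, w j * That j v) / (∑ j ∈ Finset.Icc 1 m, w j)
          ≤ (∑ j ∈ Finset.Icc 1 k, w j * That j v + ∑ j ∈ Finset.Icc (k+1) K, w j)
              / (∑ j ∈ Finset.Icc 1 K, w j))
    ∧ (∀ m m', k ≤ m → m ≤ K → k ≤ m' → m' ≤ K →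
        |optCost P θ f' (fun v =>
            (∑ j ∈ Finset.Icc 1 m, w j * That j v) / (∑ j ∈ Finset.Icc 1 m, w j))
          - optCost P θ f' (fun v =>
            (∑ j ∈ Finset.Icc 1 m', w j * That j v) / (∑ j ∈ Finset.Icc 1 m', w j))|
        ≤ ε) := by
  have hw₀ : ∀ j ∈ Finset.Icc 1 K, 0 ≤ w j := fun j hj =>
    (hw j (Finset.mem_Icc.1 hj).1 (Finset.mem_Icc.1 hj).2).le
  have hT₀ : ∀ v, ∀ j ∈ Finset.Icc 1 K, 0 ≤ That j v ∧ That j v ≤ 1 :=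
    fun v j hj => hT j (Finset.mem_Icc.1 hj).1 (Finset.mem_Icc.1 hj).2 v
  have sandwich := fun m (hkm : k ≤ m) (hmK : m ≤ K) v =>
    mixture_mem_envelopes hw₀ (hT₀ v) hkm hmK
  have hupper_le_one := fun v => upper_envelope_le_one hw₀ (fun j hj => (hT₀ v j hj).2) hkK
  refine ⟨sandwich, fun m m' hkm hmK hkm' hm'K => ?_⟩
  have hcost := fun m (hkm : k ≤ m) (hmK : m ≤ K) =>
    optCost_mem_Icc P θ f' (fun v => (sandwich m hkm hmK v).1) (fun v => (sandwich m hkm hmK v).2)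
      hupper_le_one hne
  rw [← Real.dist_eq]
  exact (Real.dist_le_of_mem_Icc (hcost m hkm hmK) (hcost m' hkm' hm'K)).trans hδ

/-- Sandwich convergence: once the bound `δ_k` is at most `ε`, the intermediate maps
`T_m` (for `k ≤ m ≤ K`) are pointwise sandwiched between the envelopes, and any two of
their optimal costs differ by at most `ε`. -/
theorem sandwich_convergence
    {V : Type*} (P : Finset (List V)) (θ : ℝ) (f' : List V → ℝ)
    (K : ℕ) (That : ℕ → V → ℝ) (w : ℕ → ℝ)
    (hw : ∀ j, 1 ≤ j → j ≤ K → 0 < w j)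
    (hT : ∀ j, 1 ≤ j → j ≤ K → ∀ v, 0 ≤ That j v ∧ That j v ≤ 1)
    (k : ℕ) (hk1 : 1 ≤ k) (hkK : k ≤ K)
    (hne : (feasSet P θ (fun v =>
      (∑ j ∈ Finset.Icc 1 k, w j * That j v) / (∑ j ∈ Finset.Icc 1 K, w j))).Nonempty)
    (ε : ℝ) (hε : 0 ≤ ε)
    (hδ : optCost P θ f' (fun v =>
            (∑ j ∈ Finset.Icc 1 k, w j * That j v) / (∑ j ∈ Finset.Icc 1 K, w j))
          - optCost P θ f' (fun v =>
            (∑ j ∈ Finset.Icc 1 k, w j * That j v + ∑ j ∈ Finset.Icc (k+1) K, w j)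
              / (∑ j ∈ Finset.Icc 1 K, w j)) ≤ ε) :
    (∀ m, k ≤ m → m ≤ K → ∀ v : V,
        (∑ j ∈ Finset.Icc 1 k, w j * That j v) / (∑ j ∈ Finset.Icc 1 K, w j)
          ≤ (∑ j ∈ Finset.Icc 1 m, w j * That j v) / (∑ j ∈ Finset.Icc 1 m, w j)
      ∧ (∑ j ∈ Finset.Icc 1 m, w j * That j v) / (∑ j ∈ Finset.Icc 1 m, w j)
          ≤ (∑ j ∈ Finset.Icc 1 k, w j * That j v + ∑ j ∈ Finset.Icc (k+1) K, w j)
              / (∑ j ∈ Finset.Icc 1 K, w j))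
    ∧ (∀ m m', k ≤ m → m ≤ K → k ≤ m' → m' ≤ K →
        |optCost P θ f' (fun v =>
            (∑ j ∈ Finset.Icc 1 m, w j * That j v) / (∑ j ∈ Finset.Icc 1 m, w j))
          - optCost P θ f' (fun v =>
            (∑ j ∈ Finset.Icc 1 m', w j * That j v) / (∑ j ∈ Finset.Icc 1 m', w j))|
        ≤ ε) :=
  sandwich_convergence_general P θ f' K That w hw hT k hkK hne ε hδ
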